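/- arXiv:1608.00624 — 2 statements merged into one kernel-verified Lean document; each statement's English description precedes it below -/
import Mathlib

section
/- Let λ̄ > 0 and let β̄ ∈ argmin_{β∈ℝᵖ} { ‖Y − Xβ‖₂ + λ̄‖β‖₁ } be the square-root lasso estimator. Assume ‖Xᵀε‖_∞ > 0 and that λ̄ satisfies the fixed-point relation λ̄ · ‖Y − Xβ̄‖₂ = ‖Xᵀε‖_∞. Then (1/n)‖X(β* − β̄)‖₂² ≤ (2/n)‖Xᵀε‖_∞‖β*‖₁. -/
open Matrix
open scoped BigOperators Classical

/-- Squared Euclidean norm of a vector. -/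
noncomputable def sqNorm {n : ℕ} (v : Fin n → ℝ) : ℝ := ∑ i, (v i) ^ 2

/-- Euclidean norm of a vector. -/
noncomputable def l2Norm {n : ℕ} (v : Fin n → ℝ) : ℝ := Real.sqrt (∑ i, (v i) ^ 2)

/-- ℓ₁ norm of a vector. -/
noncomputable def l1Norm {p : ℕ} (v : Fin p → ℝ) : ℝ := ∑ i, |v i|

/-- ℓ_∞ (supremum) norm of a vector. -/
noncomputable def linfNorm {p : ℕ} (v : Fin p → ℝ) : ℝ := ⨆ i, |v i|


lemma abs_le_linf {p : ℕ} (v : Fin p → ℝ) (i : Fin p) : |v i| ≤ linfNorm v :=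
  le_ciSup (f := fun j => |v j|) (Set.Finite.bddAbove (Set.finite_range _)) i

lemma dot_le_linf_mul_l1 {p : ℕ} (v w : Fin p → ℝ) :
    ∑ i, v i * w i ≤ linfNorm w * l1Norm v := by
  calc ∑ i, v i * w i ≤ ∑ i, |v i| * linfNorm w := by
        refine Finset.sum_le_sum fun i _ => ?_
        have h1 : |w i| ≤ linfNorm w := abs_le_linf w i
        have h2 : v i * w i ≤ |v i| * |w i| := by
          calc v i * w i ≤ |v i * w i| := le_abs_self _
          _ = |v i| * |w i| := abs_mul _ _
        have h3 : |v i| * |w i| ≤ |v i| * linfNorm w :=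
          mul_le_mul_of_nonneg_left h1 (abs_nonneg _)
        linarith
    _ = linfNorm w * l1Norm v := by
        rw [l1Norm, Finset.mul_sum]
        exact Finset.sum_congr rfl fun i _ => mul_comm _ _

lemma l2Norm_nonneg {n : ℕ} (v : Fin n → ℝ) : 0 ≤ l2Norm v := Real.sqrt_nonneg _

lemma sqNorm_nonneg {n : ℕ} (v : Fin n → ℝ) : 0 ≤ sqNorm v :=
  Finset.sum_nonneg fun i _ => sq_nonneg _

lemma l2Norm_sq {n : ℕ} (v : Fin n → ℝ) : (l2Norm v) ^ 2 = sqNorm v :=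
  Real.sq_sqrt (sqNorm_nonneg v)

lemma sq_le_sqNorm_of_le_l2 {n : ℕ} (v : Fin n → ℝ) (c : ℝ) (hc : 0 ≤ c)
    (h : c ≤ l2Norm v) : c ^ 2 ≤ sqNorm v := by
  nlinarith [l2Norm_sq v, l2Norm_nonneg v]

/-- Penalty bound for the square-root lasso: under the fixed-point relation
`λ̄‖Y − Xβ̄‖₂ = ‖Xᵀε‖_∞`, it holds that
`(1/n)‖X(β*−β̄)‖₂² ≤ (2/n)‖Xᵀε‖_∞‖β*‖₁`. -/
theorem sqrt_lasso_bound_at_truth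
    {n p : ℕ} (hn : 0 < n)
    (Y ε : Fin n → ℝ) (X : Matrix (Fin n) (Fin p) ℝ) (βstar : Fin p → ℝ)
    (hmodel : Y = X.mulVec βstar + ε)
    (lamBar : ℝ) (hlam : 0 < lamBar)
    (βbar : Fin p → ℝ)
    (hβbar : ∀ β : Fin p → ℝ,
      l2Norm (Y - X.mulVec βbar) + lamBar * l1Norm βbar
        ≤ l2Norm (Y - X.mulVec β) + lamBar * l1Norm β)
    (hεpos : 0 < linfNorm (Xᵀ.mulVec ε))
    (hfix : lamBar * l2Norm (Y - X.mulVec βbar) = linfNorm (Xᵀ.mulVec ε)) :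
    (1 / n) * sqNorm (X.mulVec (βstar - βbar))
      ≤ (2 / n) * linfNorm (Xᵀ.mulVec ε) * l1Norm βstar := by
  set u : Fin p → ℝ := βstar - βbar with hu
  set xu : Fin n → ℝ := X.mulVec u with hxu
  set r : Fin n → ℝ := Y - X.mulVec βbar with hrdef
  set S : ℝ := linfNorm (Xᵀ.mulVec ε) with hS
  set t : ℝ := lamBar with ht
  set a : ℝ := l2Norm r with ha
  set Δ : ℝ := l1Norm βstar - l1Norm βbar with hΔ
  set D : ℝ := ∑ i, xu i * r i with hD
  set Q : ℝ := sqNorm xu with hQ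
  have hxu_apply : ∀ i, xu i = ∑ j, X i j * u j := fun i => rfl
  have hXt_apply : ∀ j, Xᵀ.mulVec ε j = ∑ i, X i j * ε i := fun j => rfl
  clear_value u xu r S t a Δ D Q
  -- r = xu + ε
  have hr : r = xu + ε := by
    rw [hrdef, hxu, hu, Matrix.mulVec_sub, hmodel]
    funext i; simp [Pi.sub_apply, Pi.add_apply]; ring
  -- a > 0
  have ha_nonneg : 0 ≤ a := by rw [ha]; exact l2Norm_nonneg r
  have ha_pos : 0 < a := by
    rcases lt_or_eq_of_le ha_nonneg with h | h
    · exact h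
    · exfalso; rw [← h] at hfix; simp at hfix; rw [← hfix] at hεpos; linarith
  -- key: D ≤ a * t * Δ  (= S * Δ)
  have hkey : D ≤ a * t * Δ := by
    apply le_of_forall_pos_le_add
    intro η hη
    set C : ℝ := Q - t ^ 2 * Δ ^ 2 with hC
    set s : ℝ := min (min 1 (a / (|t * Δ| + 1))) (2 * η / (|C| + 1)) with hs
    have habs1 : (0:ℝ) < |t * Δ| + 1 := by positivity
    have habs2 : (0:ℝ) < |C| + 1 := by positivity
    have hspos : 0 < s := by
      apply lt_min (lt_min one_pos _) <;> positivity
    have hs1 : s ≤ 1 := le_trans (min_le_left _ _) (min_le_left _ _)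
    have hs2 : s ≤ a / (|t * Δ| + 1) := le_trans (min_le_left _ _) (min_le_right _ _)
    have hs3 : s ≤ 2 * η / (|C| + 1) := min_le_right _ _
    clear_value s
    -- optimality at β = βbar + s • u
    have hopt := hβbar (βbar + s • u)
    have hres : Y - X.mulVec (βbar + s • u) = fun i => r i - s * xu i := by
      funext i
      rw [Matrix.mulVec_add, Matrix.mulVec_smul]
      simp [hrdef, hxu, Pi.sub_apply, Pi.add_apply, Pi.smul_apply, smul_eq_mul]
      ring
    -- l1 convexity
    have hl1 : l1Norm (βbar + s • u) ≤ (1 - s) * l1Norm βbar + s * l1Norm βstar := by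
      rw [l1Norm, l1Norm, l1Norm, Finset.mul_sum, Finset.mul_sum, ← Finset.sum_add_distrib]
      refine Finset.sum_le_sum fun i _ => ?_
      have he : (βbar + s • u) i = (1 - s) * βbar i + s * βstar i := by
        simp [hu, Pi.add_apply, Pi.smul_apply, Pi.sub_apply, smul_eq_mul]; ring
      rw [he]
      calc |(1 - s) * βbar i + s * βstar i| ≤ |(1 - s) * βbar i| + |s * βstar i| :=
            abs_add_le _ _
        _ = (1 - s) * |βbar i| + s * |βstar i| := by
            rw [abs_mul, abs_mul, abs_of_nonneg (by linarith : (0:ℝ) ≤ 1 - s),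
              abs_of_nonneg (le_of_lt hspos)]
    -- lower bound on residual norm
    have hlow : a - s * t * Δ ≤ l2Norm (fun i => r i - s * xu i) := by
      have h1 := hopt
      rw [hres] at h1
      have h2 : t * l1Norm (βbar + s • u) ≤ t * ((1 - s) * l1Norm βbar + s * l1Norm βstar) :=
        mul_le_mul_of_nonneg_left hl1 (le_of_lt hlam)
      have h3 : s * t * Δ = t * ((1 - s) * l1Norm βbar + s * l1Norm βstar) - t * l1Norm βbar := by
        rw [hΔ]; ring
      linarith
    have hlow_nonneg : 0 ≤ a - s * t * Δ := by
      have h1 : s * (|t * Δ| + 1) ≤ a := by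
        calc s * (|t * Δ| + 1) ≤ a / (|t * Δ| + 1) * (|t * Δ| + 1) :=
              mul_le_mul_of_nonneg_right hs2 (le_of_lt habs1)
          _ = a := by field_simp
      have h2 : s * (t * Δ) ≤ s * |t * Δ| :=
        mul_le_mul_of_nonneg_left (le_abs_self _) (le_of_lt hspos)
      nlinarith
    have hsq : (a - s * t * Δ) ^ 2 ≤ sqNorm (fun i => r i - s * xu i) :=
      sq_le_sqNorm_of_le_l2 _ _ hlow_nonneg hlow
    -- expand sqNorm
    have hexp : sqNorm (fun i => r i - s * xu i) = sqNorm r - 2 * s * D + s ^ 2 * Q := by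
      rw [hQ, hD, sqNorm, sqNorm, sqNorm]
      rw [Finset.mul_sum, Finset.mul_sum, ← Finset.sum_sub_distrib, ← Finset.sum_add_distrib]
      exact Finset.sum_congr rfl fun i _ => by ring
    have haQ : sqNorm r = a ^ 2 := by rw [ha, l2Norm_sq]
    -- derive D ≤ a t Δ + s C / 2
    have hstep : 2 * s * D ≤ 2 * s * (a * t * Δ) + s ^ 2 * C := by
      rw [hexp, haQ] at hsq
      have hid : (a - s * t * Δ) ^ 2 = a ^ 2 - 2 * s * (a * t * Δ) + s ^ 2 * (t ^ 2 * Δ ^ 2) := by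
        ring
      have hid2 : s ^ 2 * C = s ^ 2 * Q - s ^ 2 * (t ^ 2 * Δ ^ 2) := by rw [hC]; ring
      linarith [hsq, hid.ge, hid.le]
    have hsC : s * C ≤ 2 * η := by
      have h1 : s * C ≤ s * |C| := mul_le_mul_of_nonneg_left (le_abs_self _) (le_of_lt hspos)
      have h2 : s * (|C| + 1) ≤ 2 * η / (|C| + 1) * (|C| + 1) :=
        mul_le_mul_of_nonneg_right hs3 (le_of_lt habs2)
      have h3 : 2 * η / (|C| + 1) * (|C| + 1) = 2 * η := by field_simp
      nlinarith
    have h4 : s ^ 2 * C = s * (s * C) := by ring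
    have h5 : s * (s * C) ≤ s * (2 * η) := mul_le_mul_of_nonneg_left hsC (le_of_lt hspos)
    have h6 : 2 * s * D ≤ 2 * s * (a * t * Δ + η) := by linarith
    exact (mul_le_mul_iff_right₀ (by positivity : (0:ℝ) < 2 * s)).mp h6
  -- swap sums
  have hswap : ∑ i, xu i * ε i = ∑ j, u j * (Xᵀ.mulVec ε) j := by
    calc ∑ i, xu i * ε i = ∑ i, ∑ j, X i j * u j * ε i := by
          refine Finset.sum_congr rfl fun i _ => ?_
          rw [hxu_apply, Finset.sum_mul]
      _ = ∑ j, ∑ i, X i j * u j * ε i := Finset.sum_comm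
      _ = ∑ j, u j * (Xᵀ.mulVec ε) j := by
          refine Finset.sum_congr rfl fun j _ => ?_
          rw [hXt_apply, Finset.mul_sum]
          exact Finset.sum_congr rfl fun i _ => by ring
  -- Q = D - ⟨u, Xᵀε⟩
  have hQD : Q = D - ∑ j, u j * (Xᵀ.mulVec ε) j := by
    rw [← hswap, hQ, hD, sqNorm, ← Finset.sum_sub_distrib]
    refine Finset.sum_congr rfl fun i _ => ?_
    have : r i = xu i + ε i := by rw [hr]; rfl
    rw [this]; ring
  -- bound on cross term
  have hcross : - ∑ j, u j * (Xᵀ.mulVec ε) j ≤ S * l1Norm u := by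
    have h := dot_le_linf_mul_l1 (fun j => -u j) (Xᵀ.mulVec ε)
    have hl1neg : l1Norm (fun j => -u j) = l1Norm u := by
      simp [l1Norm, abs_neg]
    rw [hl1neg, ← hS] at h
    calc - ∑ j, u j * (Xᵀ.mulVec ε) j = ∑ j, -u j * (Xᵀ.mulVec ε) j := by
          rw [← Finset.sum_neg_distrib]
          exact Finset.sum_congr rfl fun j _ => by ring
      _ ≤ S * l1Norm u := h
  -- l1 triangle
  have hl1u : l1Norm u ≤ l1Norm βstar + l1Norm βbar := by
    rw [l1Norm, l1Norm, l1Norm, ← Finset.sum_add_distrib]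
    exact Finset.sum_le_sum fun i _ => by
      simpa [hu, Pi.sub_apply] using abs_sub (βstar i) (βbar i)
  have hSpos : 0 < S := hεpos
  have hta : t * a = S := hfix
  -- final bound on Q
  have hQfin : Q ≤ 2 * S * l1Norm βstar := by
    have h1 : D ≤ S * Δ := by
      have : a * t * Δ = S * Δ := by rw [← hta]; ring
      linarith [hkey, this.le, this.ge]
    have h2 : Q ≤ S * Δ + S * l1Norm u := by
      rw [hQD]; linarith
    have h3 : S * l1Norm u ≤ S * (l1Norm βstar + l1Norm βbar) :=
      mul_le_mul_of_nonneg_left hl1u (le_of_lt hSpos)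
    rw [hΔ] at h2
    linarith [h2, h3]
  -- conclude
  have hn' : (0:ℝ) < n := by exact_mod_cast hn
  have hfinal : (1 / (n:ℝ)) * Q ≤ (1 / (n:ℝ)) * (2 * S * l1Norm βstar) :=
    mul_le_mul_of_nonneg_left hQfin (by positivity)
  calc (1 / (n:ℝ)) * Q ≤ (1 / (n:ℝ)) * (2 * S * l1Norm βstar) := hfinal
    _ = (2 / (n:ℝ)) * S * l1Norm βstar := by ring
end

section
/- Let M ∈ ℝ^{p×p} be an invertible matrix, let Y = β* + ε with Y, β*, ε ∈ ℝᵖ, and let β̄ ∈ argmin_{β∈ℝᵖ} { ‖Y − β‖₂² + λ̄‖Mβ‖₁ } with tuning parameter λ̄ = 2‖(M⁻¹)ᵀε‖_∞, assumed positive. Then (1/p)‖β* − β̄‖₂² ≤ (2/p)‖(M⁻¹)ᵀε‖_∞‖Mβ*‖₁. -/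
open Matrix
open scoped BigOperators Classical

lemma tf_l1Norm_nonneg {p : ℕ} (v : Fin p → ℝ) : 0 ≤ l1Norm v :=
  Finset.sum_nonneg fun _ _ => abs_nonneg _

lemma tf_abs_le_linf {p : ℕ} (u : Fin p → ℝ) (i : Fin p) : |u i| ≤ linfNorm u :=
  le_ciSup (f := fun j => |u j|) (Set.Finite.bddAbove (Set.finite_range _)) i

lemma tf_holder {p : ℕ} (u v : Fin p → ℝ) : u ⬝ᵥ v ≤ linfNorm u * l1Norm v := by
  calc u ⬝ᵥ v = ∑ i, u i * v i := rfl
  _ ≤ ∑ i, |u i| * |v i| :=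
      Finset.sum_le_sum fun i _ => (le_abs_self _).trans (abs_mul _ _).le
  _ ≤ ∑ i, linfNorm u * |v i| :=
      Finset.sum_le_sum fun i _ =>
        mul_le_mul_of_nonneg_right (tf_abs_le_linf u i) (abs_nonneg _)
  _ = linfNorm u * l1Norm v := by rw [l1Norm, Finset.mul_sum]

lemma tf_l1_sub_le {p : ℕ} (a b : Fin p → ℝ) :
    l1Norm (a - b) ≤ l1Norm a + l1Norm b := by
  simp only [l1Norm, Pi.sub_apply]
  rw [← Finset.sum_add_distrib]
  exact Finset.sum_le_sum fun i _ => abs_sub _ _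

/-- Penalty bound for trend filtering / generalized lasso with identity design:
with invertible penalty matrix `M` and `λ̄ = 2‖(M⁻¹)ᵀε‖_∞ > 0`,
`(1/p)‖β*−β̄‖₂² ≤ (2/p)‖(M⁻¹)ᵀε‖_∞‖Mβ*‖₁`. -/
theorem trend_filtering_bound
    {p : ℕ} (hp : 0 < p)
    (Y ε βstar : Fin p → ℝ)
    (hmodel : Y = βstar + ε)
    (M : Matrix (Fin p) (Fin p) ℝ) (hM : IsUnit M.det)
    (lamBar : ℝ) (hlam : lamBar = 2 * linfNorm ((M⁻¹)ᵀ.mulVec ε))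
    (hlampos : 0 < lamBar)
    (βbar : Fin p → ℝ)
    (hβbar : ∀ β : Fin p → ℝ,
      sqNorm (Y - βbar) + lamBar * l1Norm (M.mulVec βbar)
        ≤ sqNorm (Y - β) + lamBar * l1Norm (M.mulVec β)) :
    (1 / p) * sqNorm (βstar - βbar)
      ≤ (2 / p) * linfNorm ((M⁻¹)ᵀ.mulVec ε) * l1Norm (M.mulVec βstar) := by
  set u : Fin p → ℝ := (M⁻¹)ᵀ.mulVec ε with hu
  set L : ℝ := linfNorm u with hLdef
  set d : Fin p → ℝ := βstar - βbar with hd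
  set a : Fin p → ℝ := M.mulVec βbar with ha
  set b : Fin p → ℝ := M.mulVec βstar with hb
  set C : ℝ := sqNorm d with hCdef
  have hC : 0 ≤ C := Finset.sum_nonneg fun _ _ => sq_nonneg _
  have hLpos : 0 < L := by linarith
  set A : ℝ := -2 * ((Y - βbar) ⬝ᵥ d) + lamBar * (l1Norm b - l1Norm a) with hAdef
  -- key inequality from optimality at convex combinations
  have key : ∀ t : ℝ, 0 < t → t ≤ 1 → 0 ≤ A + t * C := by
    intro t ht ht1
    set β : Fin p → ℝ := (1 - t) • βbar + t • βstar with hβ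
    have expand : sqNorm (Y - β)
        = sqNorm (Y - βbar) - 2 * t * ((Y - βbar) ⬝ᵥ d) + t ^ 2 * C := by
      simp only [sqNorm, dotProduct, hCdef, hβ, hd, Pi.sub_apply, Pi.add_apply,
        Pi.smul_apply, smul_eq_mul, sqNorm]
      rw [Finset.mul_sum, Finset.mul_sum, ← Finset.sum_sub_distrib,
        ← Finset.sum_add_distrib]
      exact Finset.sum_congr rfl fun i _ => by ring
    have hmv : M.mulVec β = (1 - t) • a + t • b := by
      rw [hβ, mulVec_add, mulVec_smul, mulVec_smul]
    have hpen : l1Norm (M.mulVec β) ≤ (1 - t) * l1Norm a + t * l1Norm b := by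
      rw [hmv]
      simp only [l1Norm, Pi.add_apply, Pi.smul_apply, smul_eq_mul]
      rw [Finset.mul_sum, Finset.mul_sum, ← Finset.sum_add_distrib]
      refine Finset.sum_le_sum fun i _ => ?_
      calc |(1 - t) * a i + t * b i| ≤ |(1 - t) * a i| + |t * b i| := abs_add_le _ _
      _ = (1 - t) * |a i| + t * |b i| := by
          rw [abs_mul, abs_mul, abs_of_nonneg (by linarith : (0:ℝ) ≤ 1 - t),
            abs_of_nonneg ht.le]
    have hβ2 := hβbar β
    rw [expand] at hβ2
    have hpen2 : lamBar * l1Norm (M.mulVec β)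
        ≤ lamBar * ((1 - t) * l1Norm a + t * l1Norm b) :=
      mul_le_mul_of_nonneg_left hpen hlampos.le
    have h0 : 0 ≤ t * (A + t * C) := by nlinarith [hβ2, hpen2]
    have h1 : t * 0 ≤ t * (A + t * C) := by rw [mul_zero]; exact h0
    exact le_of_mul_le_mul_left h1 ht
  -- deduce 0 ≤ A
  have hA : 0 ≤ A := by
    rcases eq_or_lt_of_le hC with hC0 | hC0
    · have := key 1 one_pos le_rfl
      rw [← hC0] at this
      linarith
    · by_contra hA'
      push_neg at hA'
      set t : ℝ := min 1 (-A / (2 * C)) with htdef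
      have htpos : 0 < t :=
        lt_min one_pos (div_pos (by linarith) (by linarith))
      have ht1 : t ≤ 1 := min_le_left _ _
      have ht2 : t ≤ -A / (2 * C) := min_le_right _ _
      have htC : t * C ≤ -A / 2 := by
        have h := mul_le_mul_of_nonneg_right ht2 hC
        have he : -A / (2 * C) * C = -A / 2 := by
          field_simp
        rw [he] at h
        exact h
      have := key t htpos ht1
      linarith
  -- rewrite the dot product
  have hwd : (Y - βbar) ⬝ᵥ d = ε ⬝ᵥ d + C := by
    simp only [hmodel, dotProduct, hCdef, sqNorm, hd, Pi.sub_apply, Pi.add_apply]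
    rw [← Finset.sum_add_distrib]
    exact Finset.sum_congr rfl fun i _ => by ring
  -- Hölder step
  have hid : ∀ v : Fin p → ℝ, ε ⬝ᵥ v = u ⬝ᵥ M.mulVec v := by
    intro v
    rw [hu, mulVec_transpose, dotProduct_mulVec, vecMul_vecMul,
      nonsing_inv_mul M hM, vecMul_one]
  have hεd : -(ε ⬝ᵥ d) ≤ L * (l1Norm a + l1Norm b) := by
    have h1 : -(ε ⬝ᵥ d) = ε ⬝ᵥ (βbar - βstar) := by
      simp only [hd, dotProduct, Pi.sub_apply, ← Finset.sum_neg_distrib]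
      exact Finset.sum_congr rfl fun i _ => by ring
    rw [h1, hid]
    have h2 : M.mulVec (βbar - βstar) = a - b := by rw [mulVec_sub]
    rw [h2]
    calc u ⬝ᵥ (a - b) ≤ L * l1Norm (a - b) := tf_holder u (a - b)
    _ ≤ L * (l1Norm a + l1Norm b) :=
        mul_le_mul_of_nonneg_left (tf_l1_sub_le a b) hLpos.le
  -- conclude
  have hfin : C ≤ 2 * L * l1Norm b := by
    rw [hAdef, hwd, hlam] at hA
    nlinarith [hεd, hA]
  have hp' : (0:ℝ) < p := by exact_mod_cast hp
  calc (1 / (p:ℝ)) * C ≤ (1 / (p:ℝ)) * (2 * L * l1Norm b) :=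
      mul_le_mul_of_nonneg_left hfin (by positivity)
  _ = (2 / p) * L * l1Norm b := by ring
end
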